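/- Let G be a minimal bipartite matching covered graph satisfying |V2| = 2(m − n + 2), and suppose G has exactly two vertices of degree at least 3. Then there exist p ≥ 3 and an isomorphism between G and the graph obtained from the star K_{1,p} by isomorphic leaf matching. Here n is the number of vertices, m the number of edges, and V2 the set of degree-2 vertices of G. -/

import Mathlib

open SimpleGraph

/-- The degree of a vertex `v` in a graph `G`: the number of neighbours of `v`. -/
noncomputable def degN {V : Type*} (G : SimpleGraph V) (v : V) : ℕ :=
  (G.neighborSet v).ncard

/-- A finite simple graph is matching covered if it is connected, has at least 4 vertices,
and every edge lies in some perfect matching. -/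
def MatchingCovered {V : Type*} [Fintype V] (G : SimpleGraph V) : Prop :=
  G.Connected ∧ 4 ≤ Fintype.card V ∧
    ∀ e ∈ G.edgeSet, ∃ M : G.Subgraph, M.IsPerfectMatching ∧ e ∈ M.edgeSet

/-- A matching covered graph is minimal if deleting any edge destroys the property. -/
def MinimalMatchingCovered {V : Type*} [Fintype V] (G : SimpleGraph V) : Prop :=
  MatchingCovered G ∧ ∀ e ∈ G.edgeSet, ¬ MatchingCovered (G.deleteEdges {e})

/-- The graph obtained from a tree `T` by isomorphic leaf matching: two disjoint copies of `T`
(the `inl` copy and the `inr` copy), together with an edge joining the two copies of each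
leaf (degree-1 vertex) of `T`. -/
def leafMatching {V : Type*} (T : SimpleGraph V) : SimpleGraph (V ⊕ V) where
  Adj x y :=
    match x, y with
    | Sum.inl u, Sum.inl v => T.Adj u v
    | Sum.inr u, Sum.inr v => T.Adj u v
    | Sum.inl u, Sum.inr v => u = v ∧ degN T u = 1
    | Sum.inr u, Sum.inl v => u = v ∧ degN T v = 1
  symm := ⟨by
    rintro (u | u) (v | v) h
    · exact T.symm.symm _ _ h
    · exact ⟨h.1.symm, h.2⟩
    · exact ⟨h.1.symm, h.2⟩
    · exact T.symm.symm _ _ h⟩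
  loopless := ⟨by
    rintro (u | u) h
    · exact T.loopless.irrefl u h
    · exact T.loopless.irrefl u h⟩

/-- The star `K_{1,p}`: one center vertex (`none`) adjacent to `p` leaf vertices. -/
def starGraphK (p : ℕ) : SimpleGraph (Option (Fin p)) where
  Adj x y := x ≠ y ∧ (x = none ∨ y = none)
  symm := ⟨fun _ _ h => ⟨h.1.symm, h.2.symm⟩⟩
  loopless := ⟨fun _ h => h.1 rfl⟩

/-!
Both sides of a bipartition of `G` have degree sum `|E(G)|`, and they have the same size because
`G` has a perfect matching. Since all vertices other than the two vertices `a`, `b` of degree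
at least 3 have degree 2, comparing the two sides puts `a` and `b` on opposite sides with
`deg a = deg b = k`, and the extremality hypothesis then gives `k + 1` vertices on each side.
So `a` is adjacent to all but one vertex of the opposite side, and likewise `b`.

If `a` and `b` are not adjacent, `a` is adjacent to every vertex of `b`'s side except `b`, and
`b` to every vertex of `a`'s side except `a`. Each neighbour `u` of `a` has one further neighbour
`u'`, a neighbour of `b`: the graph is the union of the `k` paths `a - u - u' - b`, which is the
leaf matching of `K_{1,k}`.

If `a ∼ b`, let `z₁` be the vertex missed by `a` and `z₀` the one missed by `b`. A perfect
matching through `ab` shows `z₀ ∼ z₁`; with `w`, `y` the other neighbours of `z₀`, `z₁`, the path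
`a - w - z₀ - z₁ - y - b` avoids `ab`. Moreover every edge other than `ab` lies in a perfect
matching avoiding `ab`, forced by matching a hub along a suitable edge. Hence `G - ab` is still
matching covered, contradicting minimality.
-/

open Finset

lemma card_eq_add_of_cover {V : Type*} [Fintype V] [DecidableEq V] {s t : Finset V}
    (hst : Disjoint s t) (hcover : ∀ v, v ∈ s ∨ v ∈ t) : Fintype.card V = #s + #t := by
  rw [← card_union_of_disjoint hst, eq_univ_of_forall fun v => mem_union.mpr (hcover v),
    card_univ]

lemma Option.elim_injective {α β : Type*} {a : α} {g : β → α} (hg : g.Injective)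
    (ha : ∀ i, g i ≠ a) : Function.Injective fun x : Option β => x.elim a g := by
  rintro (_ | i) (_ | j) h
  · rfl
  · exact absurd h.symm (ha j)
  · exact absurd h (ha i)
  · exact congrArg some (hg h)

lemma degN_eq_degree {V : Type*} (G : SimpleGraph V) (v : V) [Fintype (G.neighborSet v)] :
    degN G v = G.degree v := by
  rw [degN, Set.ncard_eq_toFinset_card', ← card_neighborFinset_eq_degree, neighborFinset]

lemma starGraphK_adj {p : ℕ} {x y : Option (Fin p)} :
    (starGraphK p).Adj x y ↔ x ≠ y ∧ (x = none ∨ y = none) := .rfl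

lemma starGraphK_eq_starGraph (p : ℕ) : starGraphK p = starGraph none := by
  ext; simp [starGraphK_adj]

lemma degN_starGraphK_some {p : ℕ} (i : Fin p) : degN (starGraphK p) (some i) = 1 := by
  classical
  rw [starGraphK_eq_starGraph, degN_eq_degree, degree_starGraph_of_ne_center (by simp)]

lemma degN_starGraphK_none (p : ℕ) : degN (starGraphK p) none = p := by
  classical
  rw [starGraphK_eq_starGraph, degN_eq_degree, degree_starGraph_center, Fintype.card_option,
    Fintype.card_fin, Nat.add_sub_cancel]

section leafMatching

variable {V : Type*} {T : SimpleGraph V} {u v : V}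

@[simp] lemma leafMatching_adj_inl_inl : (leafMatching T).Adj (.inl u) (.inl v) ↔ T.Adj u v :=
  .rfl

@[simp] lemma leafMatching_adj_inr_inr : (leafMatching T).Adj (.inr u) (.inr v) ↔ T.Adj u v :=
  .rfl

@[simp] lemma leafMatching_adj_inl_inr :
    (leafMatching T).Adj (.inl u) (.inr v) ↔ u = v ∧ degN T u = 1 := .rfl

@[simp] lemma leafMatching_adj_inr_inl :
    (leafMatching T).Adj (.inr u) (.inl v) ↔ u = v ∧ degN T v = 1 := .rfl

end leafMatching

namespace SimpleGraph

variable {V : Type*} {G : SimpleGraph V}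

lemma Subgraph.IsPerfectMatching.adj_of_neighborSet_subset {M : G.Subgraph}
    (hM : M.IsPerfectMatching) {v x y z : V} (hv : G.neighborSet v ⊆ {x, y}) (hxz : M.Adj x z)
    (hzv : z ≠ v) : M.Adj v y := by
  obtain ⟨t, hvt, -⟩ := Subgraph.isPerfectMatching_iff.mp hM v
  obtain rfl | rfl := hv (M.adj_sub hvt)
  · exact absurd (hM.1.eq_of_adj_left hxz hvt.symm) hzv
  · exact hvt

theorem IsBipartiteWith.card_le_card_of_isPerfectMatching {s t : Finset V}
    (h : G.IsBipartiteWith s t) {M : G.Subgraph} (hM : M.IsPerfectMatching) : #s ≤ #t := by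
  choose μ hμ using fun v => (Subgraph.isPerfectMatching_iff.mp hM v).exists
  refine card_le_card_of_injOn μ (fun v hv => ?_) fun v _ w _ hvw => ?_
  · exact h.mem_of_mem_adj (by simpa using hv) (M.adj_sub (hμ v))
  · exact hM.1.eq_of_adj_right (hμ v) (hvw ▸ hμ w)

theorem IsBipartiteWith.card_eq_of_isPerfectMatching {s t : Finset V}
    (h : G.IsBipartiteWith s t) {M : G.Subgraph} (hM : M.IsPerfectMatching) : #s = #t :=
  (h.card_le_card_of_isPerfectMatching hM).antisymm (h.symm.card_le_card_of_isPerfectMatching hM)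

variable [Fintype V]

lemma exists_isBipartiteWith_of_colorable_two (h : G.Colorable 2) :
    ∃ s t : Finset V, G.IsBipartiteWith s t ∧ ∀ v, v ∈ s ∨ v ∈ t := by
  classical
  obtain ⟨C⟩ := h
  refine ⟨univ.filter (C · = 0), univ.filter (C · = 1), ⟨?_, fun v w hvw => ?_⟩, fun v => ?_⟩
  · simp +contextual [Set.disjoint_left]
  · have := C.valid hvw
    simp only [coe_filter, mem_univ, true_and, Set.mem_ofPred_eq]
    omega
  · simp only [mem_filter, mem_univ, true_and]
    omega

variable [DecidableEq V] [DecidableRel G.Adj]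

lemma exists_adj_ne_of_degree_eq_two {v : V} (h : G.degree v = 2) (x : V) :
    ∃ y, y ≠ x ∧ G.Adj v y := by
  have : 0 < #((G.neighborFinset v).erase x) := by
    have := pred_card_le_card_erase (s := G.neighborFinset v) (a := x)
    rw [card_neighborFinset_eq_degree, h] at this
    omega
  obtain ⟨y, hy⟩ := card_pos.mp this
  rw [mem_erase, mem_neighborFinset] at hy
  exact ⟨y, hy⟩

lemma adj_iff_of_degree_eq_two {v x y t : V} (h : G.degree v = 2)
    (hx : G.Adj v x) (hy : G.Adj v y) (hxy : x ≠ y) : G.Adj v t ↔ t = x ∨ t = y := by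
  have hN : G.neighborFinset v = {x, y} := by
    refine (eq_of_subset_of_card_le (s := {x, y}) ?_ ?_).symm
    · simp [insert_subset_iff, hx, hy]
    · rw [card_neighborFinset_eq_degree, h, card_pair hxy]
  rw [← mem_neighborFinset, hN, mem_insert, mem_singleton]

lemma neighborSet_subset_of_degree_eq_two {v x y : V} (h : G.degree v = 2)
    (hx : G.Adj v x) (hy : G.Adj v y) (hxy : x ≠ y) : G.neighborSet v ⊆ {x, y} :=
  fun _ => (adj_iff_of_degree_eq_two h hx hy hxy).mp

lemma IsBipartiteWith.exists_forall_adj_of_degree_add_one_eq {s t : Finset V}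
    (h : G.IsBipartiteWith s t) {a : V} (ha : a ∈ s) (hdeg : G.degree a + 1 = #t) :
    ∃ z ∈ t, ¬ G.Adj a z ∧ ∀ v ∈ t, v ≠ z → G.Adj a v := by
  obtain ⟨z, hz, hzt⟩ := exists_eq_insert_iff.mpr
    ⟨isBipartiteWith_neighborFinset_subset h ha, by rw [card_neighborFinset_eq_degree, hdeg]⟩
  refine ⟨z, hzt ▸ mem_insert_self z _, by rwa [mem_neighborFinset] at hz, fun v hv hvz => ?_⟩
  rw [← hzt, mem_insert] at hv
  exact (mem_neighborFinset _ _ _).mp (hv.resolve_left hvz)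

end SimpleGraph

open SimpleGraph

section MatchingCovered

variable {V : Type*} [Fintype V] {G : SimpleGraph V}

theorem MatchingCovered.connected (hG : MatchingCovered G) : G.Connected := hG.1

theorem MatchingCovered.four_le_card (hG : MatchingCovered G) : 4 ≤ Fintype.card V := hG.2.1

theorem MatchingCovered.exists_isPerfectMatching_adj (hG : MatchingCovered G) {x y : V}
    (hxy : G.Adj x y) : ∃ M : G.Subgraph, M.IsPerfectMatching ∧ M.Adj x y :=
  hG.2.2 s(x, y) hxy

theorem MatchingCovered.exists_isPerfectMatching (hG : MatchingCovered G) :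
    ∃ M : G.Subgraph, M.IsPerfectMatching := by
  have : Nontrivial V := Fintype.one_lt_card_iff_nontrivial.mp (by linarith [hG.four_le_card])
  obtain ⟨v⟩ := hG.connected.nonempty
  obtain ⟨w, hvw⟩ := hG.connected.preconnected.exists_adj_of_nontrivial v
  obtain ⟨M, hM, -⟩ := hG.exists_isPerfectMatching_adj hvw
  exact ⟨M, hM⟩

theorem MatchingCovered.two_le_degree [DecidableRel G.Adj] (hG : MatchingCovered G) (v : V) :
    2 ≤ G.degree v := by
  classical
  have hcard := hG.four_le_card
  have : Nontrivial V := Fintype.one_lt_card_iff_nontrivial.mp (by omega)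
  by_contra! hlt
  have hv : G.degree v = 1 := by have := hG.connected.preconnected.degree_pos_of_nontrivial v; omega
  obtain ⟨u, hvu, hu⟩ := degree_eq_one_iff_existsUnique_adj.mp hv
  have : Nontrivial ({v}ᶜ : Set V) := Fintype.one_lt_card_iff_nontrivial.mp (by
    rw [Fintype.card_compl_set, Set.card_singleton]; omega)
  obtain ⟨⟨z, hzv⟩, huz⟩ := (hG.connected.induce_compl_singleton_of_degree_eq_one hv).preconnected
    |>.exists_adj_of_nontrivial ⟨u, hvu.ne.symm⟩
  obtain ⟨M, hM, huzM⟩ := hG.exists_isPerfectMatching_adj huz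
  obtain ⟨t, hvt, -⟩ := Subgraph.isPerfectMatching_iff.mp hM v
  rw [hu t (M.adj_sub hvt)] at hvt
  exact hzv (hM.1.eq_of_adj_left huzM hvt.symm)

theorem MatchingCovered.ncard_degN_eq_two [DecidableRel G.Adj] (hG : MatchingCovered G)
    (h3 : {v | 3 ≤ degN G v}.ncard = 2) : {v | degN G v = 2}.ncard = Fintype.card V - 2 := by
  have hcompl : {v | degN G v = 2} = {v | 3 ≤ degN G v}ᶜ := by
    ext v
    have := hG.two_le_degree v
    simp only [degN_eq_degree, Set.mem_ofPred_eq, Set.mem_compl_iff]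
    omega
  have := Set.ncard_add_ncard_compl {v | 3 ≤ degN G v}
  rw [h3, Nat.card_eq_fintype_card] at this
  rw [hcompl]
  omega

theorem matchingCovered_deleteEdges {a b : V} (hconn : (G.deleteEdges {s(a, b)}).Connected)
    (hcard : 4 ≤ Fintype.card V)
    (h : ∀ ⦃x y⦄, G.Adj x y → s(x, y) ≠ s(a, b) →
      ∃ M : G.Subgraph, M.IsPerfectMatching ∧ M.Adj x y ∧ ¬ M.Adj a b) :
    MatchingCovered (G.deleteEdges {s(a, b)}) := by
  refine ⟨hconn, hcard, fun e he => ?_⟩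
  induction e using Sym2.ind with | _ x y =>
  rw [mem_edgeSet, deleteEdges_adj, Set.mem_singleton_iff] at he
  obtain ⟨M, hM, hxy, hab⟩ := h he.1 he.2
  have hle : M.spanningCoe ≤ G.deleteEdges {s(a, b)} := fun p q hpq => by
    refine deleteEdges_adj.mpr ⟨M.adj_sub hpq, fun hpq' => hab ?_⟩
    rw [Set.mem_singleton_iff] at hpq'
    exact (Subgraph.mem_edgeSet (G' := M)).mp (hpq' ▸ hpq)
  exact ⟨_, (Subgraph.IsPerfectMatching.toSubgraph_iff hle).mpr hM, hxy⟩

/-- Matching `a` to a neighbour other than `b` and `p` forces `p` onto `q`. -/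
theorem MatchingCovered.exists_isPerfectMatching_adj_not_adj [DecidableEq V] [DecidableRel G.Adj]
    (hG : MatchingCovered G) {a b p q : V} (ha : 3 ≤ G.degree a) (hap : G.Adj a p)
    (hp : G.degree p = 2) (hpq : G.Adj p q) (hqa : q ≠ a) :
    ∃ M : G.Subgraph, M.IsPerfectMatching ∧ M.Adj p q ∧ ¬ M.Adj a b := by
  obtain ⟨x, hx, hxbp⟩ := exists_mem_notMem_of_card_lt_card (s := {b, p})
    (t := G.neighborFinset a) (by rw [card_neighborFinset_eq_degree]; exact card_le_two.trans_lt ha)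
  rw [mem_neighborFinset] at hx
  rw [mem_insert, mem_singleton, not_or] at hxbp
  obtain ⟨M, hM, hax⟩ := hG.exists_isPerfectMatching_adj hx
  exact ⟨M, hM, hM.adj_of_neighborSet_subset
    (neighborSet_subset_of_degree_eq_two hp hap.symm hpq hqa.symm) hax hxbp.2,
    hM.1.not_adj_left_of_ne hxbp.1 hax⟩

end MatchingCovered

/-- The configuration left by the degree count. By `degree_left_add_one`, `a` is adjacent to all
but one vertex of `t`, and likewise `b` to all but one vertex of `s`. -/
structure TwoHubs {V : Type*} [Fintype V] (G : SimpleGraph V) [DecidableRel G.Adj]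
    (s t : Finset V) (a b : V) : Prop where
  isBipartiteWith : G.IsBipartiteWith s t
  left_mem : a ∈ s
  right_mem : b ∈ t
  degree_eq_two : ∀ v, v ≠ a → v ≠ b → G.degree v = 2
  three_le_degree_left : 3 ≤ G.degree a
  three_le_degree_right : 3 ≤ G.degree b
  degree_left_add_one : G.degree a + 1 = #t
  degree_right_add_one : G.degree b + 1 = #s

namespace TwoHubs

variable {V : Type*} [Fintype V] {G : SimpleGraph V} [DecidableRel G.Adj] {s t : Finset V}
  {a b : V}

theorem of_isBipartiteWith [DecidableEq V] (hst : G.IsBipartiteWith s t)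
    (hcover : ∀ v, v ∈ s ∨ v ∈ t) (hcard : #s = #t) (ha : a ∈ s) (hab : a ≠ b)
    (ha3 : 3 ≤ G.degree a) (hb3 : 3 ≤ G.degree b) (hdeg : ∀ v, v ≠ a → v ≠ b → G.degree v = 2)
    (hext : Fintype.card V - 2 + 2 * Fintype.card V = 2 * #G.edgeFinset + 4) :
    TwoHubs G s t a b := by
  have hd := disjoint_coe.mp hst.disjoint
  have hV := card_eq_add_of_cover hd hcover
  have hsum_s := isBipartiteWith_sum_degrees_eq_card_edges hst
  have hsum_t := isBipartiteWith_sum_degrees_eq_card_edges' hst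
  have htwo : ∀ u : Finset V, a ∉ u → b ∉ u → ∑ v ∈ u, G.degree v = 2 * #u := fun u ha hb => by
    rw [sum_congr rfl fun v hv => hdeg v (ne_of_mem_of_not_mem hv ha) (ne_of_mem_of_not_mem hv hb),
      sum_const, smul_eq_mul, mul_comm]
  have hat : a ∉ t := Finset.disjoint_left.mp hd ha
  have hbt : b ∈ t := by
    -- otherwise all of `t` has degree 2 and the two degree sums give `deg a + deg b = 4`
    refine (hcover b).resolve_left fun hbs => ?_
    have hbs' : b ∈ s.erase a := mem_erase.mpr ⟨hab.symm, hbs⟩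
    rw [← add_sum_erase s _ ha, ← add_sum_erase _ _ hbs', htwo _ (by simp) (by simp),
      card_erase_of_mem hbs', card_erase_of_mem ha] at hsum_s
    rw [htwo t hat (Finset.disjoint_left.mp hd hbs)] at hsum_t
    omega
  rw [← add_sum_erase s _ ha, htwo _ (by simp)
    (fun h => Finset.disjoint_left.mp hd (mem_of_mem_erase h) hbt), card_erase_of_mem ha] at hsum_s
  rw [← add_sum_erase t _ hbt, htwo _ (fun h => hat (mem_of_mem_erase h)) (by simp),
    card_erase_of_mem hbt] at hsum_t
  have : 0 < #s := card_pos.mpr ⟨a, ha⟩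
  exact ⟨hst, ha, hbt, hdeg, ha3, hb3, by omega, by omega⟩

theorem symm (h : TwoHubs G s t a b) : TwoHubs G t s b a :=
  ⟨h.1.symm, h.3, h.2, fun v hvb hva => h.4 v hva hvb, h.6, h.5, h.8, h.7⟩

theorem left_notMem (h : TwoHubs G s t a b) : a ∉ t :=
  Finset.disjoint_left.mp (disjoint_coe.mp h.isBipartiteWith.disjoint) h.left_mem

theorem right_notMem (h : TwoHubs G s t a b) : b ∉ s :=
  h.symm.left_notMem

theorem exists_forall_adj [DecidableEq V] (h : TwoHubs G s t a b) :
    ∃ z ∈ t, ¬ G.Adj a z ∧ ∀ v ∈ t, v ≠ z → G.Adj a v :=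
  h.isBipartiteWith.exists_forall_adj_of_degree_add_one_eq h.left_mem h.degree_left_add_one

theorem adj_iff_of_not_adj [DecidableEq V] (h : TwoHubs G s t a b) (hab : ¬ G.Adj a b) {v : V} :
    G.Adj a v ↔ v ∈ t ∧ v ≠ b := by
  obtain ⟨z, -, -, hza⟩ := h.exists_forall_adj
  obtain rfl : z = b := by by_contra hzb; exact hab (hza b h.right_mem (Ne.symm hzb))
  exact ⟨fun hav => ⟨h.isBipartiteWith.mem_of_mem_adj h.left_mem hav, by rintro rfl; exact hab hav⟩,
    fun ⟨hv, hvz⟩ => hza v hv hvz⟩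

theorem exists_partner_of_not_adj [DecidableEq V] (h : TwoHubs G s t a b) (hab : ¬ G.Adj a b)
    {v : V} (hv : v ∈ t.erase b) :
    ∃ q ∈ s, q ≠ a ∧ (∀ x, G.Adj v x ↔ x = a ∨ x = q) ∧ ∀ x, G.Adj q x ↔ x = b ∨ x = v := by
  obtain ⟨hvb, hvt⟩ := mem_erase.mp hv
  have hva : v ≠ a := ne_of_mem_of_not_mem hvt h.left_notMem
  obtain ⟨q, hqa, hvq⟩ := exists_adj_ne_of_degree_eq_two (h.degree_eq_two v hva hvb) a
  have hqs : q ∈ s := h.isBipartiteWith.symm.mem_of_mem_adj hvt hvq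
  have hqb : q ≠ b := ne_of_mem_of_not_mem hqs h.right_notMem
  have hav : G.Adj a v := (h.adj_iff_of_not_adj hab).mpr ⟨hvt, hvb⟩
  have hbq : G.Adj b q := (h.symm.adj_iff_of_not_adj fun h' => hab h'.symm).mpr ⟨hqs, hqa⟩
  exact ⟨q, hqs, hqa, fun x => adj_iff_of_degree_eq_two (h.degree_eq_two v hva hvb) hav.symm hvq
    hqa.symm, fun x => adj_iff_of_degree_eq_two (h.degree_eq_two q hqa hqb) hbq.symm hvq.symm
    hvb.symm⟩

theorem nonempty_iso_of_not_adj [DecidableEq V] (h : TwoHubs G s t a b) (hab : ¬ G.Adj a b)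
    (hcover : ∀ v, v ∈ s ∨ v ∈ t) (hcard : #s = #t) :
    Nonempty (G ≃g leafMatching (starGraphK (G.degree a))) := by
  set k := G.degree a
  choose! f hfs hfa hNv hNf using fun v => h.exists_partner_of_not_adj hab (v := v)
  have hNa : ∀ v, G.Adj a v ↔ v ∈ t ∧ v ≠ b := fun v => h.adj_iff_of_not_adj hab
  have hNb : ∀ v, G.Adj b v ↔ v ∈ s ∧ v ≠ a := fun v =>
    h.symm.adj_iff_of_not_adj fun h' => hab h'.symm
  have hd := disjoint_coe.mp h.isBipartiteWith.disjoint
  have hcard' : #(t.erase b) = k := by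
    rw [card_erase_of_mem h.right_mem, ← h.degree_left_add_one, Nat.add_sub_cancel]
  set e := ((t.erase b).equivFinOfCardEq hcard').symm
  have het : ∀ i, (e i : V) ∈ t.erase b := fun i => (e i).2
  have heV : ∀ i, (e i : V) ∈ t ∧ (e i : V) ∉ s ∧ (e i : V) ≠ a ∧ (e i : V) ≠ b := fun i =>
    have hi := mem_erase.mp (het i)
    ⟨hi.2, Finset.disjoint_right.mp hd hi.2, ne_of_mem_of_not_mem hi.2 h.left_notMem, hi.1⟩
  have hfV : ∀ i, f (e i) ∈ s ∧ f (e i) ∉ t ∧ f (e i) ≠ a ∧ f (e i) ≠ b := fun i =>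
    have hi := hfs _ (het i)
    ⟨hi, Finset.disjoint_left.mp hd hi, hfa _ (het i), ne_of_mem_of_not_mem hi h.right_notMem⟩
  have hef : ∀ i j, (e i : V) ≠ f (e j) := fun i j hij => (heV i).2.1 (hij ▸ (hfV j).1)
  have hab' : a ≠ b := ne_of_mem_of_not_mem h.left_mem h.right_notMem
  have hk1 : k ≠ 1 := by have := h.three_le_degree_left; omega
  have hfinj : ∀ i j, f (e i) = f (e j) ↔ i = j := by
    refine fun i j => ⟨fun hij => ?_, by rintro rfl; rfl⟩
    have := (hNf _ (het j) (e i)).mp (hij ▸ (hNf _ (het i) _).mpr (.inr rfl))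
    simpa [(heV i).2.2.2] using this
  let ψ : Option (Fin k) ⊕ Option (Fin k) → V :=
    Sum.elim (fun x => x.elim a fun i => e i) (fun x => x.elim b fun i => f (e i))
  have hψ : ∀ {x y}, G.Adj (ψ x) (ψ y) ↔ (leafMatching (starGraphK k)).Adj x y := by
    rintro ((_ | i) | (_ | i)) ((_ | j) | (_ | j)) <;>
      simp [ψ, hNa, hNb, hNv _ (het _), hNf _ (het _), starGraphK_adj, degN_starGraphK_some,
        degN_starGraphK_none, heV, hfV, hfinj, hef, fun i j => (hef i j).symm,
        fun i => (heV i).2.2.1.symm, fun i => (hfV i).2.2.2.symm, hab', hab'.symm, hk1,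
        @eq_comm (Fin k)]
  have hinj : Function.Injective ψ := by
    refine (Option.elim_injective (Subtype.val_injective.comp e.injective) fun i => (heV i).2.2.1)
      |>.sumElim (Option.elim_injective (fun i j => (hfinj i j).mp) fun i => (hfV i).2.2.2) ?_
    rintro (_ | i) (_ | j)
    exacts [hab', (hfV j).2.2.1.symm, (heV i).2.2.2, hef i j]
  have hbij : Function.Bijective ψ := by
    refine (Fintype.bijective_iff_injective_and_card ψ).mpr ⟨hinj, ?_⟩
    simp only [card_eq_add_of_cover hd hcover, Fintype.card_sum, Fintype.card_option,
      Fintype.card_fin]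
    have := h.degree_left_add_one
    omega
  exact ⟨(RelIso.mk (Equiv.ofBijective ψ hbij) hψ).symm⟩

/-- Otherwise both neighbours of `z₀` would have neighbours exactly `a` and `z₀`, and a perfect
matching through `ab` would match both of them to `z₀`. -/
theorem adj_of_adj_hubs [DecidableEq V] (h : TwoHubs G s t a b) (hG : MatchingCovered G)
    (hab : G.Adj a b) {z₀ z₁ : V} (hta : ∀ v ∈ t, v ≠ z₁ → G.Adj a v) (hz₀ : z₀ ∈ s)
    (hbz₀ : ¬ G.Adj b z₀) : G.Adj z₀ z₁ := by
  by_contra hz₀₁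
  have hz₀a : z₀ ≠ a := by rintro rfl; exact hbz₀ hab.symm
  have h₂ := h.degree_eq_two z₀ hz₀a (ne_of_mem_of_not_mem hz₀ h.right_notMem)
  obtain ⟨M, hM, habM⟩ := hG.exists_isPerfectMatching_adj hab
  have hmatch : ∀ x, G.Adj z₀ x → M.Adj x z₀ := by
    intro x hx
    have hxt : x ∈ t := h.isBipartiteWith.mem_of_mem_adj hz₀ hx
    have hxb : x ≠ b := by rintro rfl; exact hbz₀ hx.symm
    have hxa : G.Adj x a := (hta x hxt (by rintro rfl; exact hz₀₁ hx)).symm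
    have hx₂ := h.degree_eq_two x (ne_of_mem_of_not_mem hxt h.left_notMem) hxb
    exact hM.adj_of_neighborSet_subset
      (neighborSet_subset_of_degree_eq_two hx₂ hxa hx.symm hz₀a.symm) habM hxb.symm
  obtain ⟨x₁, -, hx₁⟩ := exists_adj_ne_of_degree_eq_two h₂ z₀
  obtain ⟨x₂, hx₂₁, hx₂⟩ := exists_adj_ne_of_degree_eq_two h₂ x₁
  exact hx₂₁ (hM.1.eq_of_adj_right (hmatch x₂ hx₂) (hmatch x₁ hx₁))

theorem exists_isPerfectMatching_adj_not_adj [DecidableEq V] (h : TwoHubs G s t a b)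
    (hG : MatchingCovered G) {z₀ z₁ w : V} (hta : ∀ v ∈ t, v ≠ z₁ → G.Adj a v)
    (hsb : ∀ v ∈ s, v ≠ z₀ → G.Adj b v) (haw : G.Adj a w) (hwb : w ≠ b) (hz₀a : z₀ ≠ a)
    (hz₀ : G.neighborSet z₀ ⊆ {w, z₁}) {p q : V} (hpq : G.Adj p q) (hp : p ∈ t)
    (hne : s(p, q) ≠ s(a, b)) :
    ∃ M : G.Subgraph, M.IsPerfectMatching ∧ M.Adj p q ∧ ¬ M.Adj a b := by
  have hq : q ∈ s := h.isBipartiteWith.symm.mem_of_mem_adj hp hpq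
  by_cases hpb : p = b
  · subst hpb
    have hqa : q ≠ a := by rintro rfl; exact hne Sym2.eq_swap
    obtain ⟨M, hM, hMpq⟩ := hG.exists_isPerfectMatching_adj hpq
    exact ⟨M, hM, hMpq, fun h' => hM.1.not_adj_left_of_ne hqa hMpq h'.symm⟩
  by_cases hqa : q = a
  · subst hqa
    obtain ⟨M, hM, hMpq⟩ := hG.exists_isPerfectMatching_adj hpq
    exact ⟨M, hM, hMpq, hM.1.not_adj_left_of_ne hpb hMpq.symm⟩
  have hpa : p ≠ a := ne_of_mem_of_not_mem hp h.left_notMem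
  have hqb : q ≠ b := ne_of_mem_of_not_mem hq h.right_notMem
  by_cases hpz : p ≠ z₁
  · exact hG.exists_isPerfectMatching_adj_not_adj h.three_le_degree_left (hta p hp hpz)
      (h.degree_eq_two p hpa hpb) hpq hqa
  by_cases hqz : q ≠ z₀
  · obtain ⟨M, hM, hMqp, hMba⟩ := hG.exists_isPerfectMatching_adj_not_adj
      h.three_le_degree_right (hsb q hq hqz) (h.degree_eq_two q hqa hqb) hpq.symm hpb
    exact ⟨M, hM, hMqp.symm, fun h' => hMba h'.symm⟩
  rw [not_not] at hpz hqz
  subst hpz hqz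
  -- the edge `z₁ z₀`: matching `a` to `w` forces `z₀` onto `z₁`
  obtain ⟨M, hM, hMaw⟩ := hG.exists_isPerfectMatching_adj haw
  exact ⟨M, hM, (hM.adj_of_neighborSet_subset hz₀ hMaw.symm hz₀a.symm).symm,
    hM.1.not_adj_left_of_ne hwb hMaw⟩

theorem matchingCovered_deleteEdges_of_adj [DecidableEq V] (h : TwoHubs G s t a b)
    (hG : MatchingCovered G) (hab : G.Adj a b) : MatchingCovered (G.deleteEdges {s(a, b)}) := by
  obtain ⟨z₁, hz₁, haz₁, hta⟩ := h.exists_forall_adj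
  obtain ⟨z₀, hz₀, hbz₀, hsb⟩ := h.symm.exists_forall_adj
  have hz₀a : z₀ ≠ a := by rintro rfl; exact hbz₀ hab.symm
  have hz₀b : z₀ ≠ b := ne_of_mem_of_not_mem hz₀ h.right_notMem
  have hz₁a : z₁ ≠ a := ne_of_mem_of_not_mem hz₁ h.left_notMem
  have hz₁b : z₁ ≠ b := by rintro rfl; exact haz₁ hab
  have hz₀₁ := h.adj_of_adj_hubs hG hab hta hz₀ hbz₀
  obtain ⟨w, hwz₁, hz₀w⟩ := exists_adj_ne_of_degree_eq_two (h.degree_eq_two z₀ hz₀a hz₀b) z₁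
  have hwt : w ∈ t := h.isBipartiteWith.mem_of_mem_adj hz₀ hz₀w
  have hwa : w ≠ a := ne_of_mem_of_not_mem hwt h.left_notMem
  have hwb : w ≠ b := by rintro rfl; exact hbz₀ hz₀w.symm
  obtain ⟨y, hyz₀, hz₁y⟩ := exists_adj_ne_of_degree_eq_two (h.degree_eq_two z₁ hz₁a hz₁b) z₀
  have hys : y ∈ s := h.isBipartiteWith.symm.mem_of_mem_adj hz₁ hz₁y
  have hya : y ≠ a := by rintro rfl; exact haz₁ hz₁y.symm
  have hyb : y ≠ b := ne_of_mem_of_not_mem hys h.right_notMem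
  have hG' : ∀ {p q}, G.Adj p q → p ≠ a → p ≠ b → (G.deleteEdges {s(a, b)}).Adj p q :=
    fun hpq hpa hpb => by simp [hpq, hpa, hpb]
  have hreach : (G.deleteEdges {s(a, b)}).Reachable a b :=
    (hG' (hta w hwt hwz₁).symm hwa hwb).symm.reachable.trans <|
      (hG' hz₀w.symm hwa hwb).reachable.trans <| (hG' hz₀₁ hz₀a hz₀b).reachable.trans <|
      (hG' hz₁y hz₁a hz₁b).reachable.trans (hG' (hsb y hys hyz₀).symm hya hyb).reachable
  refine matchingCovered_deleteEdges (hG.connected.connected_delete_edge_of_not_isBridge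
    (by rwa [isBridge_iff, not_not])) hG.four_le_card fun p q hpq hne => ?_
  wlog hp : p ∈ t generalizing p q
  · have hq : q ∈ t := ((h.isBipartiteWith.mem_of_adj hpq).resolve_right fun hpq' => hp hpq'.1).2
    obtain ⟨M, hM, hMqp, hMab⟩ := this q p hpq.symm (by rwa [Sym2.eq_swap]) hq
    exact ⟨M, hM, hMqp.symm, hMab⟩
  exact h.exists_isPerfectMatching_adj_not_adj hG hta hsb (hta w hwt hwz₁) hwb hz₀a
    (neighborSet_subset_of_degree_eq_two (h.degree_eq_two z₀ hz₀a hz₀b) hz₀w hz₀₁ hwz₁) hpq hp hne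

theorem nonempty_iso_of_minimal [DecidableEq V] (h : TwoHubs G s t a b)
    (hmin : MinimalMatchingCovered G) (hcover : ∀ v, v ∈ s ∨ v ∈ t) (hcard : #s = #t) :
    Nonempty (G ≃g leafMatching (starGraphK (G.degree a))) := by
  by_cases hab : G.Adj a b
  · exact absurd (h.matchingCovered_deleteEdges_of_adj hmin.1 hab) (hmin.2 _ hab)
  · exact h.nonempty_iso_of_not_adj hab hcover hcard

end TwoHubs

/-- A 2-vertex extremal minimal bipartite matching covered graph with exactly two vertices of
degree at least 3 is obtained from a star by isomorphic leaf matching. -/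
theorem stmt16 {V : Type*} [Fintype V] (G : SimpleGraph V)
    (hbip : G.Colorable 2) (hmin : MinimalMatchingCovered G)
    (hext : {v | degN G v = 2}.ncard + 2 * Fintype.card V = 2 * G.edgeSet.ncard + 4)
    (h2 : {v | 3 ≤ degN G v}.ncard = 2) :
    ∃ p : ℕ, 3 ≤ p ∧ Nonempty (G ≃g leafMatching (starGraphK p)) := by
  classical
  rw [hmin.1.ncard_degN_eq_two h2, ← coe_edgeFinset, Set.ncard_coe_finset] at hext
  obtain ⟨a, b, hab, hhubs⟩ := Set.ncard_eq_two.mp h2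
  have hhub : ∀ v, 3 ≤ G.degree v ↔ v = a ∨ v = b := fun v => by
    simpa [degN_eq_degree] using Set.ext_iff.mp hhubs v
  have hdeg : ∀ v, v ≠ a → v ≠ b → G.degree v = 2 := fun v hva hvb => by
    have := (hhub v).not.mpr (by tauto); have := hmin.1.two_le_degree v; omega
  have ha3 := (hhub a).mpr (.inl rfl)
  have hb3 := (hhub b).mpr (.inr rfl)
  obtain ⟨s, t, hst, hcover⟩ := exists_isBipartiteWith_of_colorable_two hbip
  obtain ⟨M, hM⟩ := hmin.1.exists_isPerfectMatching
  have hcard := hst.card_eq_of_isPerfectMatching hM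
  refine ⟨G.degree a, ha3, ?_⟩
  rcases hcover a with has | hat
  · exact (TwoHubs.of_isBipartiteWith hst hcover hcard has hab ha3 hb3 hdeg hext)
      |>.nonempty_iso_of_minimal hmin hcover hcard
  · have hcover' v : v ∈ t ∨ v ∈ s := (hcover v).symm
    exact (TwoHubs.of_isBipartiteWith hst.symm hcover' hcard.symm hat hab ha3 hb3 hdeg hext)
      |>.nonempty_iso_of_minimal hmin hcover' hcard.symm
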